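/- Let X be a finite totally ordered alphabet and let T ⊆ X⁺ be a non-empty subsemigroup of X⁺ which is a rational language recognized by a deterministic finite automaton with m states. Let v₁, v₂, … be the enumeration of T in shortlex order, and define w₁ = v₁ and w_{n+1} = (w_n v_{n+1} w_n)^{(n+1)!} for n ≥ 1. Let φ : X⁺ → S be a homomorphism to a finite semigroup S with |S| = k, and set r = m(k+1) − 1 and N = |X| + |X|² + ⋯ + |X|^r. Then φ(w_n) = φ(w_N) for all n ≥ N, and φ(w_N) is an idempotent belonging to the minimal ideal of the subsemigroup φ(T) of S. -/

import Mathlib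

/-- The `n`-th power (concatenation) of a word. -/
def wordPow {X : Type*} (n : ℕ) (u : List X) : List X := (List.replicate n u).flatten

/-- The shortlex (strict) order on words: first by length, then lexicographically. -/
def ShortlexLT {X : Type*} [LinearOrder X] (u v : List X) : Prop :=
  u.length < v.length ∨ (u.length = v.length ∧ List.Lex (· < ·) u v)

/-- `I` is a (two-sided) ideal of the subsemigroup `U` of `S`. -/
def IsIdealOf {S : Type*} [Semigroup S] (U I : Set S) : Prop :=
  I.Nonempty ∧ I ⊆ U ∧ ∀ a ∈ I, ∀ s ∈ U, s * a ∈ I ∧ a * s ∈ I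

/-!
The image `U = φ(T)` is a finite semigroup, so it has a minimal ideal `K`. Pumping a word of
`T` with image in `K` on the pairs (state of `M`, value of `φ`) of its prefixes yields such a
word of length at most `r`; in shortlex order it is some `v_i` with `i ≤ N`, and from `w_i` on
every `φ(w_n)` lies in the ideal `K`. Since every element of a semigroup of order `k` has index
and period at most `k`, `x^{n!}` is idempotent for `n ≥ k`, so `e = φ(w_N)` is an idempotent of
`K`. An idempotent `f` of `K` in the local monoid `eSe` is a unit there (minimality gives
`e ∈ S f S`), hence equals `e`; applied to `(e y e)^{n!}` this gives
`φ(w_{n+1}) = (e φ(v_{n+1}) e)^{(n+1)!} = e` for all `n ≥ N`.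
-/

instance IsIdempotentElem.instMonoidCorner {S : Type*} [Semigroup S] {e : S}
    (he : IsIdempotentElem e) : Monoid he.Corner where
  __ : Semigroup he.Corner := inferInstanceAs (Semigroup (Subsemigroup.corner e))
  one := ⟨e, e, by simp only [he.eq]⟩
  one_mul r := Subtype.ext ((Subsemigroup.mem_corner_iff he).mp r.2).1
  mul_one r := Subtype.ext ((Subsemigroup.mem_corner_iff he).mp r.2).2

section WithOnePow

variable {S : Type*} [Semigroup S]

theorem WithOne.isIdempotentElem_coe_iff {x : S} :
    IsIdempotentElem (x : WithOne S) ↔ IsIdempotentElem x := by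
  simp only [IsIdempotentElem, ← WithOne.coe_mul, WithOne.coe_inj]

theorem WithOne.exists_mem_coe_pow_eq {P : Set S} (hP : ∀ a ∈ P, ∀ b ∈ P, a * b ∈ P)
    {x : S} (hx : x ∈ P) {m : ℕ} (hm : m ≠ 0) : ∃ z ∈ P, (x : WithOne S) ^ m = z := by
  induction m with
  | zero => exact absurd rfl hm
  | succ m ih =>
    rcases eq_or_ne m 0 with rfl | hm
    · exact ⟨x, hx, pow_one _⟩
    · obtain ⟨z, hz, hzx⟩ := ih hm
      exact ⟨z * x, hP z hz x hx, by rw [pow_succ, hzx, WithOne.coe_mul]⟩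

theorem WithOne.exists_coe_pow_eq_coe_pow [Fintype S] (x : S) :
    ∃ i j, 1 ≤ i ∧ i < j ∧ j ≤ Fintype.card S + 1 ∧ (x : WithOne S) ^ i = (x : WithOne S) ^ j := by
  classical
  have hmaps : Set.MapsTo ((x : WithOne S) ^ ·) (Finset.Icc 1 (Fintype.card S + 1))
      (Finset.univ.image ((↑) : S → WithOne S)) := by
    intro m hm
    obtain ⟨z, -, hz⟩ := exists_mem_coe_pow_eq (P := Set.univ) (by simp) (Set.mem_univ x)
      (m := m) (by rw [Finset.coe_Icc, Set.mem_Icc] at hm; omega)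
    rw [Finset.coe_image]
    exact ⟨z, by simp, hz.symm⟩
  obtain ⟨i, hi, j, hj, hij, heq⟩ := Finset.exists_ne_map_eq_of_card_lt_of_maps_to
    (by simp [Finset.card_image_of_injective _ WithOne.coe_injective]) hmaps
  rw [Finset.mem_Icc] at hi hj
  rcases hij.lt_or_gt with h | h
  · exact ⟨i, j, hi.1, h, hj.2, heq⟩
  · exact ⟨j, i, hj.1, h, hi.2, heq.symm⟩

theorem WithOne.isIdempotentElem_coe_pow_factorial [Fintype S] (x : S) {n : ℕ}
    (hn : Fintype.card S ≤ n) : IsIdempotentElem ((x : WithOne S) ^ n.factorial) := by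
  obtain ⟨i, j, hi, hij, hj, heq⟩ := exists_coe_pow_eq_coe_pow x
  have hperiodic : Function.IsPeriodicPt ((x : WithOne S) * ·) (j - i) ((x : WithOne S) ^ i) := by
    rw [Function.IsPeriodicPt, Function.IsFixedPt, mul_left_iterate_apply, ← pow_add,
      Nat.sub_add_cancel hij.le, heq]
  have hin : i ≤ n.factorial := by have := Nat.self_le_factorial n; omega
  have hdvd : j - i ∣ n.factorial := Nat.dvd_factorial (by omega) (by omega)
  have := (hperiodic.trans_dvd hdvd).apply_iterate (n.factorial - i)
  rwa [mul_left_iterate_apply, ← pow_add, Nat.sub_add_cancel hin, Function.IsPeriodicPt,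
    Function.IsFixedPt, mul_left_iterate_apply] at this

end WithOnePow

section Ideals

variable {S : Type*} [Semigroup S] {U I J K : Set S}

def IsMinimalIdealOf (U K : Set S) : Prop :=
  IsIdealOf U K ∧ ∀ I, IsIdealOf U I → K ⊆ I

namespace IsIdealOf

theorem subset (hI : IsIdealOf U I) : I ⊆ U := hI.2.1

theorem mul_mem_left (hI : IsIdealOf U I) {a s : S} (ha : a ∈ I) (hs : s ∈ U) : s * a ∈ I :=
  (hI.2.2 a ha s hs).1

theorem mul_mem_right (hI : IsIdealOf U I) {a s : S} (ha : a ∈ I) (hs : s ∈ U) : a * s ∈ I :=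
  (hI.2.2 a ha s hs).2

theorem mul_mem (hI : IsIdealOf U I) {a b : S} (ha : a ∈ I) (hb : b ∈ I) : a * b ∈ I :=
  hI.mul_mem_right ha (hI.subset hb)

theorem self (hne : U.Nonempty) (hU : ∀ a ∈ U, ∀ b ∈ U, a * b ∈ U) : IsIdealOf U U :=
  ⟨hne, subset_rfl, fun a ha s hs => ⟨hU s hs a ha, hU a ha s hs⟩⟩

theorem inter (hI : IsIdealOf U I) (hJ : IsIdealOf U J) : IsIdealOf U (I ∩ J) := by
  obtain ⟨a, ha⟩ := hI.1
  obtain ⟨b, hb⟩ := hJ.1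
  refine ⟨⟨a * b, hI.mul_mem_right ha (hJ.subset hb), hJ.mul_mem_left hb (hI.subset ha)⟩,
    fun x hx => hI.subset hx.1, fun x hx s hs => ⟨?_, ?_⟩⟩
  · exact ⟨hI.mul_mem_left hx.1 hs, hJ.mul_mem_left hx.2 hs⟩
  · exact ⟨hI.mul_mem_right hx.1 hs, hJ.mul_mem_right hx.2 hs⟩

end IsIdealOf

theorem exists_isMinimalIdealOf [Finite S] (hne : U.Nonempty)
    (hU : ∀ a ∈ U, ∀ b ∈ U, a * b ∈ U) : ∃ K, IsMinimalIdealOf U K := by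
  obtain ⟨K, hK, hmin⟩ := exists_minimal_of_wellFoundedLT (IsIdealOf U) ⟨U, .self hne hU⟩
  exact ⟨K, hK, fun I hI =>
    (hmin (hK.inter hI) Set.inter_subset_left).trans Set.inter_subset_right⟩

namespace IsMinimalIdealOf

theorem exists_mul_mul_eq (hK : IsMinimalIdealOf U K) {x e : S} (hx : x ∈ K) (he : e ∈ K) :
    ∃ a ∈ K, ∃ b ∈ K, a * x * b = e := by
  refine hK.2 {z | ∃ a ∈ K, ∃ b ∈ K, a * x * b = z} ⟨⟨x * x * x, x, hx, x, hx, rfl⟩, ?_, ?_⟩ he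
  · rintro _ ⟨a, ha, b, hb, rfl⟩
    exact hK.1.subset (hK.1.mul_mem (hK.1.mul_mem ha hx) hb)
  · rintro _ ⟨a, ha, b, hb, rfl⟩ s hs
    refine ⟨⟨s * a, hK.1.mul_mem_left ha hs, b, hb, by simp only [mul_assoc]⟩,
      ⟨a, ha, b * s, hK.1.mul_mem_right hb hs, by simp only [mul_assoc]⟩⟩

/-- The idempotent `e` of `K` is a product `p * f * q` in the finite local monoid `eSe`,
so `f` is a unit there, and an idempotent unit is the identity. -/
theorem eq_of_isIdempotentElem [Finite S] (hK : IsMinimalIdealOf U K) {e f : S}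
    (heK : e ∈ K) (hfK : f ∈ K) (he : IsIdempotentElem e) (hf : IsIdempotentElem f)
    (hef : e * f = f) (hfe : f * e = f) : f = e := by
  obtain ⟨a, -, b, -, hab⟩ := hK.exists_mul_mul_eq hfK heK
  let p : he.Corner := ⟨e * a * f, a * f, by simp only [mul_assoc, hfe]⟩
  let q : he.Corner := ⟨f * b * e, f * b, by simp only [← mul_assoc, hef]⟩
  let F : he.Corner := ⟨f, f, show e * f * e = f by rw [hef, hfe]⟩
  have hpFq : p * (F * q) = 1 := Subtype.ext <| show e * a * f * (f * (f * b * e)) = e by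
    calc e * a * f * (f * (f * b * e)) = e * a * (f * f * f) * b * e := by simp only [mul_assoc]
      _ = e * (a * f * b) * e := by rw [hf.eq, hf.eq]; simp only [mul_assoc]
      _ = e := by rw [hab, he.eq, he.eq]
  have : Finite he.Corner := Subtype.finite
  have hF : IsUnit F := isUnit_of_mul_isUnit_left (IsUnit.of_mul_eq_one_right p hpFq)
  have hFidem : IsIdempotentElem F := Subtype.ext hf.eq
  exact congrArg Subtype.val ((IsIdempotentElem.iff_eq_one_of_isUnit hF).mp hFidem)

theorem coe_mul_mul_pow_factorial [Fintype S] (hK : IsMinimalIdealOf U K) {e y : S}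
    (heK : e ∈ K) (he : IsIdempotentElem e) (hy : y ∈ U) {n : ℕ} (hn : Fintype.card S ≤ n) :
    ((e * y * e : S) : WithOne S) ^ n.factorial = e := by
  have hgK : e * y * e ∈ K := hK.1.mul_mem (hK.1.mul_mem_right heK hy) heK
  obtain ⟨f, hfK, hgf⟩ := WithOne.exists_mem_coe_pow_eq (fun _ ha _ hb => hK.1.mul_mem ha hb)
    hgK n.factorial_ne_zero
  have hf : IsIdempotentElem f := by
    rw [← WithOne.isIdempotentElem_coe_iff, ← hgf]
    exact WithOne.isIdempotentElem_coe_pow_factorial _ hn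
  obtain ⟨m, hm⟩ := Nat.exists_eq_succ_of_ne_zero n.factorial_ne_zero
  have hef : e * f = f := WithOne.coe_injective <| by
    rw [WithOne.coe_mul, ← hgf, hm, pow_succ', ← mul_assoc, ← WithOne.coe_mul,
      show e * (e * y * e) = e * y * e by simp only [← mul_assoc, he.eq]]
  have hfe : f * e = f := WithOne.coe_injective <| by
    rw [WithOne.coe_mul, ← hgf, hm, pow_succ, mul_assoc, ← WithOne.coe_mul,
      show e * y * e * e = e * y * e by rw [mul_assoc _ e e, he.eq]]
  rw [hgf, hK.eq_of_isIdempotentElem heK hfK he hf hef hfe]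

end IsMinimalIdealOf

end Ideals

section ZiminSequence

variable {S : Type*} [Semigroup S]

/-- The image `a n = φ (w n)`, `b n = φ (v n)` of the sequence `w₁ = v₁`,
`w_{n+1} = (w_n v_{n+1} w_n)^{(n+1)!}`, with powers taken in `WithOne S`. -/
def IsZiminSequence (a b : ℕ → S) : Prop :=
  a 1 = b 1 ∧ ∀ n, 1 ≤ n →
    (a (n + 1) : WithOne S) = ((a n * b (n + 1) * a n : S) : WithOne S) ^ (n + 1).factorial

namespace IsZiminSequence

variable {a b : ℕ → S} {U K : Set S}

theorem mem_of_le (hz : IsZiminSequence a b) (hK : IsIdealOf U K)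
    (haU : ∀ n, 1 ≤ n → a n ∈ U) (hbU : ∀ n, 1 ≤ n → b n ∈ U)
    {i : ℕ} (hi : 1 ≤ i) (hbi : b i ∈ K) : ∀ n, i ≤ n → a n ∈ K := by
  have hsucc : ∀ n, 1 ≤ n → a n * b (n + 1) * a n ∈ K → a (n + 1) ∈ K := by
    intro n hn hK'
    obtain ⟨z, hzK, hz'⟩ := WithOne.exists_mem_coe_pow_eq (fun _ ha _ hb => hK.mul_mem ha hb)
      hK' (n + 1).factorial_ne_zero
    rw [← hz.2 n hn, WithOne.coe_inj] at hz'
    exact hz' ▸ hzK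
  intro n hn
  induction n, hn using Nat.le_induction with
  | base =>
    obtain ⟨p, rfl⟩ : ∃ p, i = p + 1 := Nat.exists_eq_add_of_le' hi
    rcases Nat.eq_zero_or_pos p with rfl | hp
    · exact hz.1 ▸ hbi
    · exact hsucc p hp (hK.mul_mem_right (hK.mul_mem_left hbi (haU p hp)) (haU p hp))
  | succ n hin ih =>
    exact hsucc n (hi.trans hin)
      (hK.mul_mem_right (hK.mul_mem_right ih (hbU _ (by omega))) (haU n (by omega)))

theorem isIdempotentElem [Fintype S] (hz : IsZiminSequence a b) {N : ℕ} (h1N : 1 ≤ N)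
    (hSN : Fintype.card S ≤ N) : IsIdempotentElem (a N) := by
  obtain ⟨p, rfl⟩ : ∃ p, N = p + 1 := Nat.exists_eq_add_of_le' h1N
  rcases Nat.eq_zero_or_pos p with rfl | hp
  · have : Subsingleton S := Fintype.card_le_one_iff_subsingleton.mp hSN
    exact Subsingleton.elim _ _
  · rw [← WithOne.isIdempotentElem_coe_iff, hz.2 p hp]
    exact WithOne.isIdempotentElem_coe_pow_factorial _ hSN

theorem eq_of_le [Fintype S] (hz : IsZiminSequence a b) (hK : IsMinimalIdealOf U K)
    (hbU : ∀ n, 1 ≤ n → b n ∈ U) {N : ℕ} (h1N : 1 ≤ N) (hSN : Fintype.card S ≤ N)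
    (haN : a N ∈ K) (hidem : IsIdempotentElem (a N)) : ∀ n, N ≤ n → a n = a N := by
  intro n hn
  induction n, hn using Nat.le_induction with
  | base => rfl
  | succ n hn ih =>
    apply WithOne.coe_injective
    rw [hz.2 n (h1N.trans hn), ih]
    exact hK.coe_mul_mul_pow_factorial haN hidem (hbU _ (by omega)) (by omega)

end IsZiminSequence

end ZiminSequence

section Words

variable {X : Type*}

theorem wordPow_succ (c : ℕ) (u : List X) : wordPow (c + 1) u = u ++ wordPow c u := by
  simp [wordPow, List.replicate_succ]

theorem wordPow_mem {T : Set (List X)} (hT : ∀ u ∈ T, ∀ v ∈ T, u ++ v ∈ T) {u : List X}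
    (hu : u ∈ T) {c : ℕ} (hc : c ≠ 0) : wordPow c u ∈ T := by
  induction c with
  | zero => exact absurd rfl hc
  | succ c ih =>
    rcases eq_or_ne c 0 with rfl | hc
    · simpa [wordPow] using hu
    · rw [wordPow_succ]
      exact hT u hu _ (ih hc)

theorem wordPow_ne_nil {u : List X} (hu : u ≠ []) {c : ℕ} (hc : c ≠ 0) : wordPow c u ≠ [] :=
  wordPow_mem (T := {u | u ≠ []}) (fun _ hu _ _ => List.append_ne_nil_of_left_ne_nil hu _) hu hc

variable {S : Type*} [Semigroup S] {φ : List X → S}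

theorem mul_mem_image {T : Set (List X)} (hT : ∀ u ∈ T, ∀ v ∈ T, u ++ v ∈ T)
    (hTne : ∀ t ∈ T, t ≠ []) (hφ : ∀ u v, u ≠ [] → v ≠ [] → φ (u ++ v) = φ u * φ v) :
    ∀ a ∈ φ '' T, ∀ b ∈ φ '' T, a * b ∈ φ '' T := by
  rintro _ ⟨u, hu, rfl⟩ _ ⟨u', hu', rfl⟩
  exact ⟨u ++ u', hT u hu u' hu', hφ u u' (hTne u hu) (hTne u' hu')⟩

theorem coe_map_wordPow (hφ : ∀ u v, u ≠ [] → v ≠ [] → φ (u ++ v) = φ u * φ v)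
    {u : List X} (hu : u ≠ []) {c : ℕ} (hc : c ≠ 0) :
    (φ (wordPow c u) : WithOne S) = (φ u : WithOne S) ^ c := by
  induction c with
  | zero => exact absurd rfl hc
  | succ c ih =>
    rcases eq_or_ne c 0 with rfl | hc
    · simp [wordPow]
    · rw [wordPow_succ, hφ _ _ hu (wordPow_ne_nil hu hc), WithOne.coe_mul, ih hc, pow_succ']

theorem map_take_append_drop (hφ : ∀ u v, u ≠ [] → v ≠ [] → φ (u ++ v) = φ u * φ v)
    {t : List X} {j j' : ℕ} (hj : t.take j ≠ []) (hjj' : j ≤ j')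
    (h : φ (t.take j) = φ (t.take j')) : φ (t.take j ++ t.drop j') = φ t := by
  by_cases hd : t.drop j' = []
  · rw [hd, List.append_nil, h, List.take_of_length_le (List.drop_eq_nil_iff.mp hd)]
  · have hj' : t.take j' ≠ [] := by
      simp only [ne_eq, List.take_eq_nil_iff, not_or] at hj ⊢
      exact ⟨by omega, hj.2⟩
    rw [hφ _ _ hj hd, h, ← hφ _ _ hj' hd, List.take_append_drop]

theorem DFA.evalFrom_take_append_drop {σ : Type*} (M : DFA X σ) {s : σ} {t : List X}
    {j j' : ℕ} (h : M.evalFrom s (t.take j) = M.evalFrom s (t.take j')) :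
    M.evalFrom s (t.take j ++ t.drop j') = M.evalFrom s t := by
  rw [DFA.evalFrom_of_append, h, ← DFA.evalFrom_of_append, List.take_append_drop]

/-- Pigeonhole on the pairs (state, value of `φ`) reached by the prefixes of lengths
`1, …, |σ| |S| + 1` finds a factor whose removal keeps both the state and the value. -/
theorem DFA.exists_accepts_map_eq_length_lt {σ : Type*} [Fintype σ] [Fintype S] (M : DFA X σ)
    (hφ : ∀ u v, u ≠ [] → v ≠ [] → φ (u ++ v) = φ u * φ v) {t : List X} (ht : t ∈ M.accepts)
    (hlen : Fintype.card σ * Fintype.card S < t.length) :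
    ∃ t' ∈ M.accepts, φ t' = φ t ∧ t'.length < t.length := by
  let f : Fin (Fintype.card σ * Fintype.card S + 1) → σ × S := fun j =>
    (M.evalFrom M.start (t.take (j + 1)), φ (t.take (j + 1)))
  obtain ⟨j, j', hne, hjj'⟩ := Fintype.exists_ne_map_eq_of_card_lt f (by simp)
  wlog hlt : j < j' generalizing j j'
  · exact this j' j hne.symm hjj'.symm (lt_of_le_of_ne (not_lt.mp hlt) hne.symm)
  have hlt' : (j : ℕ) < j' := hlt
  have hj' : (j' : ℕ) < t.length := by omega
  refine ⟨t.take (j + 1) ++ t.drop (j' + 1), ?_, ?_, ?_⟩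
  · rw [DFA.mem_accepts] at ht ⊢
    rwa [DFA.eval, M.evalFrom_take_append_drop (Prod.ext_iff.mp hjj').1]
  · refine map_take_append_drop hφ ?_ (by omega) (Prod.ext_iff.mp hjj').2
    simp only [ne_eq, List.take_eq_nil_iff, not_or]
    exact ⟨by omega, List.ne_nil_of_length_pos (by omega)⟩
  · simp only [List.length_append, List.length_take, List.length_drop]
    omega

theorem DFA.exists_accepts_map_eq_length_le {σ : Type*} [Fintype σ] [Fintype S] (M : DFA X σ)
    (hφ : ∀ u v, u ≠ [] → v ≠ [] → φ (u ++ v) = φ u * φ v) {t : List X} (ht : t ∈ M.accepts) :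
    ∃ t' ∈ M.accepts, φ t' = φ t ∧ t'.length ≤ Fintype.card σ * Fintype.card S := by
  induction hn : t.length using Nat.strong_induction_on generalizing t with
  | _ n ih =>
    by_cases hlen : Fintype.card σ * Fintype.card S < n
    · obtain ⟨t', ht', hφt', hlt⟩ := M.exists_accepts_map_eq_length_lt hφ ht (hn ▸ hlen)
      obtain ⟨t'', ht'', hφt'', hle⟩ := ih _ (hn ▸ hlt) ht' rfl
      exact ⟨t'', ht'', hφt''.trans hφt', hle⟩
    · exact ⟨t, ht, rfl, by omega⟩

end Words

section Shortlex

variable {X : Type*} [LinearOrder X]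

theorem ShortlexLT.length_le {u v : List X} (h : ShortlexLT u v) : u.length ≤ v.length :=
  h.elim le_of_lt fun h => h.1.le

theorem ShortlexLT.ne {u v : List X} (h : ShortlexLT u v) : u ≠ v := by
  rintro rfl
  rcases h with h | ⟨-, h⟩
  · exact lt_irrefl _ h
  · exact irrefl _ h

/-- `v 1, …, v i` are distinct non-empty words of length at most `r`. -/
theorem index_le_sum_card_pow [Fintype X] {v : ℕ → List X}
    (hmono : ∀ i j, 1 ≤ i → i < j → ShortlexLT (v i) (v j)) (hne : ∀ i, 1 ≤ i → v i ≠ [])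
    {i r : ℕ} (hlen : (v i).length ≤ r) :
    i ≤ ∑ ℓ ∈ Finset.Icc 1 r, Fintype.card X ^ ℓ := by
  classical
  have hinj : Set.InjOn v (Finset.Icc 1 i) := by
    intro j hj j' hj' h
    simp only [Finset.coe_Icc, Set.mem_Icc] at hj hj'
    by_contra hne'
    rcases lt_or_gt_of_ne hne' with hlt | hlt
    · exact (hmono j j' hj.1 hlt).ne h
    · exact (hmono j' j hj'.1 hlt).ne h.symm
  have hmaps : Set.MapsTo List.length (Finset.image v (Finset.Icc 1 i) : Set (List X))
      (Finset.Icc 1 r : Set ℕ) := by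
    simp only [Finset.coe_image, Finset.coe_Icc, Set.mapsTo_image_iff]
    intro j hj
    have hji : (v j).length ≤ (v i).length := by
      rcases hj.2.lt_or_eq with hlt | rfl
      · exact (hmono j i hj.1 hlt).length_le
      · exact le_rfl
    simp only [Set.mem_Icc]
    exact ⟨List.length_pos_iff.mpr (hne j hj.1), hji.trans hlen⟩
  calc i = (Finset.image v (Finset.Icc 1 i)).card := by
        rw [Finset.card_image_of_injOn hinj, Nat.card_Icc, Nat.add_sub_cancel]
    _ = ∑ ℓ ∈ Finset.Icc 1 r, {u ∈ Finset.image v (Finset.Icc 1 i) | u.length = ℓ}.card :=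
        Finset.card_eq_sum_card_fiberwise hmaps
    _ ≤ ∑ ℓ ∈ Finset.Icc 1 r, Fintype.card X ^ ℓ :=
        Finset.sum_le_sum fun _ _ => Finset.card_filter_length_eq_le

end Shortlex

theorem le_sum_Icc_pow {b : ℕ} (hb : 1 ≤ b) (r : ℕ) : r ≤ ∑ ℓ ∈ Finset.Icc 1 r, b ^ ℓ :=
  calc r = ∑ _ ∈ Finset.Icc 1 r, 1 := by simp
    _ ≤ _ := Finset.sum_le_sum fun ℓ _ => Nat.one_le_pow _ _ hb

section Zimin

variable {X : Type*} {v w : ℕ → List X}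

theorem zimin_word_mem {T : Set (List X)} (hT : ∀ u ∈ T, ∀ v ∈ T, u ++ v ∈ T)
    (hv : ∀ i, 1 ≤ i → v i ∈ T) (hw1 : w 1 = v 1)
    (hwsucc : ∀ n, 1 ≤ n → w (n + 1) = wordPow (n + 1).factorial (w n ++ v (n + 1) ++ w n)) :
    ∀ n, 1 ≤ n → w n ∈ T := by
  intro n hn
  induction n, hn using Nat.le_induction with
  | base => exact hw1 ▸ hv 1 le_rfl
  | succ n hn ih =>
    rw [hwsucc n hn]
    exact wordPow_mem hT (hT _ (hT _ ih _ (hv _ (by omega))) _ ih) (Nat.factorial_ne_zero _)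

theorem isZiminSequence_map {S : Type*} [Semigroup S] {φ : List X → S}
    (hφ : ∀ u v, u ≠ [] → v ≠ [] → φ (u ++ v) = φ u * φ v)
    (hv : ∀ i, 1 ≤ i → v i ≠ []) (hw : ∀ n, 1 ≤ n → w n ≠ []) (hw1 : w 1 = v 1)
    (hwsucc : ∀ n, 1 ≤ n → w (n + 1) = wordPow (n + 1).factorial (w n ++ v (n + 1) ++ w n)) :
    IsZiminSequence (fun n => φ (w n)) (fun n => φ (v n)) := by
  refine ⟨congrArg φ hw1, fun n hn => ?_⟩
  have hwvw : w n ++ v (n + 1) ++ w n ≠ [] := by simp [hw n hn]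
  simp only
  rw [hwsucc n hn, coe_map_wordPow hφ hwvw (Nat.factorial_ne_zero _),
    hφ _ _ (by simp [hw n hn]) (hw n hn), hφ _ _ (hw n hn) (hv _ (by omega))]

end Zimin

/-- The iterated Zimin-type sequence `w₁ = v₁`, `w_{n+1} = (w_n v_{n+1} w_n)^{(n+1)!}`
built from the shortlex enumeration `v₁, v₂, …` of a rational subsemigroup
`T ⊆ X⁺` converges under any homomorphism `φ` to a finite semigroup: with
`k = |S|`, `r = m(k+1) − 1` and `N = |X| + |X|² + ⋯ + |X|^r`, the value
`φ(w_n)` is constant for `n ≥ N`, and `φ(w_N)` is an idempotent lying in the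
minimal ideal of the subsemigroup `φ(T)` of `S`. -/
theorem zimin_idempotent_in_minimal_ideal {X : Type*} [Fintype X] [LinearOrder X]
    (T : Set (List X)) (hTne : T.Nonempty) (hTsub : ∀ u ∈ T, ∀ v ∈ T, u ++ v ∈ T)
    (hTpos : ∀ t ∈ T, t ≠ [])
    {σ : Type*} [Fintype σ] (M : DFA X σ) (hrec : M.accepts = T)
    (v : ℕ → List X) (hvmem : ∀ i : ℕ, 1 ≤ i → v i ∈ T)
    (hvsurj : ∀ t ∈ T, ∃ i : ℕ, 1 ≤ i ∧ v i = t)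
    (hvmono : ∀ i j : ℕ, 1 ≤ i → i < j → ShortlexLT (v i) (v j))
    (w : ℕ → List X) (hw1 : w 1 = v 1)
    (hwsucc : ∀ n : ℕ, 1 ≤ n →
      w (n + 1) = wordPow (Nat.factorial (n + 1)) (w n ++ v (n + 1) ++ w n))
    {S : Type*} [Semigroup S] [Fintype S] (φ : List X → S)
    (hφ : ∀ u v' : List X, u ≠ [] → v' ≠ [] → φ (u ++ v') = φ u * φ v')
    (N : ℕ)
    (hN : N = ∑ i ∈ Finset.Icc 1 (Fintype.card σ * (Fintype.card S + 1) - 1),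
      (Fintype.card X) ^ i) :
    (∀ n : ℕ, N ≤ n → φ (w n) = φ (w N)) ∧ IsIdempotentElem (φ (w N)) ∧
    ∃ I : Set S, IsIdealOf (φ '' T) I ∧ (∀ I' : Set S, IsIdealOf (φ '' T) I' → I ⊆ I') ∧
      φ (w N) ∈ I := by
  obtain ⟨K, hK⟩ := exists_isMinimalIdealOf (hTne.image φ) (mul_mem_image hTsub hTpos hφ)
  obtain ⟨_, hxK⟩ := hK.1.1
  obtain ⟨t, htT, rfl⟩ := hK.1.subset hxK
  obtain ⟨t', htT', hφt', hlen⟩ := M.exists_accepts_map_eq_length_le hφ (hrec ▸ htT)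
  obtain ⟨i, hi, rfl⟩ := hvsurj t' (hrec ▸ htT')
  set r := Fintype.card σ * (Fintype.card S + 1) - 1
  have hSr : Fintype.card S ≤ r ∧ Fintype.card σ * Fintype.card S ≤ r := by
    have hσ : 0 < Fintype.card σ := Fintype.card_pos_iff.mpr ⟨M.start⟩
    have := Nat.le_mul_of_pos_left (Fintype.card S) hσ
    constructor <;> simp only [r, mul_add, mul_one] <;> omega
  have hrN : r ≤ N :=
    hN ▸ le_sum_Icc_pow (Fintype.card_pos_iff.mpr ⟨(v i).head (hTpos _ (hvmem i hi))⟩) r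
  have hiN : i ≤ N := hN ▸
    index_le_sum_card_pow hvmono (fun j hj => hTpos _ (hvmem j hj)) (hlen.trans hSr.2)
  have hwT := zimin_word_mem hTsub hvmem hw1 hwsucc
  have hz := isZiminSequence_map (φ := φ) hφ (fun j hj => hTpos _ (hvmem j hj))
    (fun n hn => hTpos _ (hwT n hn)) hw1 hwsucc
  have hbU : ∀ n, 1 ≤ n → φ (v n) ∈ φ '' T := fun n hn => ⟨v n, hvmem n hn, rfl⟩
  have haN : φ (w N) ∈ K := hz.mem_of_le hK.1 (fun n hn => ⟨w n, hwT n hn, rfl⟩) hbU hi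
    (hφt' ▸ hxK) N hiN
  have hidem := hz.isIdempotentElem (hi.trans hiN) (hSr.1.trans hrN)
  exact ⟨hz.eq_of_le hK hbU (hi.trans hiN) (hSr.1.trans hrN) haN hidem, hidem, K, hK.1, hK.2, haN⟩
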